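/- Let h : [0,1] → ℝ be the binary entropy h(q) = −q·log₂ q − (1−q)·log₂(1−q) (with h(0) = h(1) = 0). Then for every p_L ∈ [0,1): 1 − h(p_L/2)/2 − p_L/2 > 0. -/
import Mathlib

/-- The binary entropy function (base-2 logarithm), with h(0) = h(1) = 0. -/
noncomputable def binEnt (q : ℝ) : ℝ :=
  -q * Real.logb 2 q - (1 - q) * Real.logb 2 (1 - q)

lemma binEnt_eq (q : ℝ) : binEnt q = Real.binEntropy q / Real.log 2 := by
  unfold binEnt Real.binEntropy Real.logb
  rw [Real.log_inv, Real.log_inv]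
  ring

lemma binEnt_le_one (q : ℝ) : binEnt q ≤ 1 := by
  rw [binEnt_eq, div_le_one (Real.log_pos one_lt_two)]
  exact Real.binEntropy_le_log_two

/-- positivity of the Csiszár–Körner rate
1 − h(p_L/2)/2 − p_L/2 for every p_L ∈ [0,1). -/
theorem csiszar_korner_rate_pos (pL : ℝ) (h0 : 0 ≤ pL) (h1 : pL < 1) :
    0 < 1 - binEnt (pL / 2) / 2 - pL / 2 := by
  have := binEnt_le_one (pL / 2)
  linarith
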